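/- Let μ, ν ≥ 0 and let f be a trigonometric (cosine) polynomial on [0, π] with cosine coefficients a_k = ∫_0^π f(θ) cos(kθ) dθ. Then there is a constant C depending only on μ and ν such that for all k, |Δ_2^ν Δ^μ a_k| ≤ C ∫_0^π |f(θ)| (sin(θ/2))^{μ+ν} (cos(θ/2))^ν dθ. -/

import Mathlib

open Real

noncomputable section

/-- Cesàro numbers `A_j^μ = Γ(j+μ+1)/(Γ(j+1)Γ(μ+1))`. -/
def cesaroA (μ : ℝ) (j : ℕ) : ℝ :=
  Real.Gamma (j + μ + 1) / (Real.Gamma (j + 1) * Real.Gamma (μ + 1))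

/-- Fractional difference of order `μ` with increment `κ`:
`Δ_κ^μ m_k = Σ_{j=0}^∞ A_j^{−μ−1} m_{k+κj}`. -/
def fdiff (κ : ℕ) (μ : ℝ) (m : ℕ → ℝ) (k : ℕ) : ℝ :=
  ∑' j : ℕ, cesaroA (-μ - 1) j * m (k + κ * j)
/-- `f` is a cosine polynomial. -/
def IsCosPoly (f : ℝ → ℝ) : Prop :=
  ∃ (n : ℕ) (c : ℕ → ℝ), ∀ θ : ℝ, f θ = ∑ k ∈ Finset.range n, c k * Real.cos (k * θ)

lemma cesaroA_of_nat {μ : ℝ} (n : ℕ) (h : μ = n) (j : ℕ) : cesaroA (-μ - 1) j = 0 := by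
  subst h
  have h0 : Real.Gamma (-(n : ℝ) - 1 + 1) = 0 := by
    rw [show (-(n:ℝ) - 1 + 1) = -(n:ℝ) by ring]
    exact (Real.Gamma_eq_zero_iff _).mpr ⟨n, rfl⟩
  unfold cesaroA
  rw [h0, mul_zero, div_zero]

lemma gamma_neg_ne_zero {μ : ℝ} (h : ∀ n : ℕ, μ ≠ n) : Real.Gamma (-μ) ≠ 0 := by
  intro hc
  obtain ⟨m, hm⟩ := (Real.Gamma_eq_zero_iff _).mp hc
  exact h m (by linarith)

lemma sub_nat_ne_zero {μ : ℝ} (h : ∀ n : ℕ, μ ≠ n) (j : ℕ) : (j : ℝ) - μ ≠ 0 := by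
  intro hc
  exact h j (by linarith)

lemma cesaroA_succ {μ : ℝ} (h : ∀ n : ℕ, μ ≠ n) (j : ℕ) :
    ((j : ℝ) + 1) * cesaroA (-μ - 1) (j + 1) = ((j : ℝ) - μ) * cesaroA (-μ - 1) j := by
  have h1 : ((j:ℕ):ℝ) + 1 ≠ 0 := by positivity
  have hg1 : Real.Gamma (((j:ℝ) + 1) + 1) = ((j:ℝ) + 1) * Real.Gamma ((j:ℝ) + 1) :=
    Real.Gamma_add_one h1
  have hg2 : Real.Gamma (((j:ℝ) - μ) + 1) = ((j:ℝ) - μ) * Real.Gamma ((j:ℝ) - μ) :=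
    Real.Gamma_add_one (sub_nat_ne_zero h j)
  unfold cesaroA
  push_cast
  rw [show ((j:ℝ) + 1 + (-μ - 1) + 1) = ((j:ℝ) - μ) + 1 by ring,
    show ((j:ℝ) + 1 + 1) = ((j:ℝ) + 1) + 1 by ring, hg1, hg2,
    show ((j:ℝ) + (-μ - 1) + 1) = (j:ℝ) - μ by ring]
  have hΓj : Real.Gamma ((j:ℝ) + 1) ≠ 0 := by
    intro hc
    obtain ⟨m, hm⟩ := (Real.Gamma_eq_zero_iff _).mp hc
    have : (0:ℝ) < (j:ℝ) + 1 := by positivity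
    simp only [hm] at this
    have : (0:ℝ) ≤ (m:ℝ) := Nat.cast_nonneg m
    linarith
  have hΓν := gamma_neg_ne_zero h
  field_simp

lemma cesaroA_zero {μ : ℝ} (h : ∀ n : ℕ, μ ≠ n) : cesaroA (-μ - 1) 0 = 1 := by
  unfold cesaroA
  rw [show ((0:ℕ):ℝ) + (-μ - 1) + 1 = -μ by push_cast; ring,
    show ((0:ℕ):ℝ) + 1 = 1 by push_cast; ring,
    show -μ - 1 + 1 = -μ by ring, Real.Gamma_one]
  field_simp [gamma_neg_ne_zero h]

lemma summable_abs_cesaroA {μ : ℝ} (hμ : 0 < μ) (h : ∀ n : ℕ, μ ≠ n) :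
    Summable (fun j : ℕ => |cesaroA (-μ - 1) j|) := by
  set d : ℕ → ℝ := fun j => ((j : ℝ) + 1) ^ (-(1 + μ)) with hd
  have hdpos : ∀ j, 0 < d j := fun j => Real.rpow_pos_of_pos (by positivity) _
  -- key ratio inequality
  have key : ∀ j : ℕ, μ ≤ (j : ℝ) → ((j : ℝ) - μ) * d j ≤ ((j : ℝ) + 1) * d (j + 1) := by
    intro j hj
    have h2 : (0:ℝ) < (j : ℝ) + 2 := by positivity
    have h1 : (0:ℝ) < (j : ℝ) + 1 := by positivity
    -- Bernoulli : (1 - 1/(j+2))^(1+μ) ≥ 1 - (1+μ)/(j+2)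
    have hbern := one_add_mul_self_le_rpow_one_add
      (s := -(1 / ((j:ℝ) + 2))) (by rw [neg_le, neg_neg]; rw [div_le_one h2]; linarith)
      (p := 1 + μ) (by linarith)
    have hq : (1 + -(1 / ((j:ℝ) + 2))) = ((j:ℝ) + 1) / ((j:ℝ) + 2) := by
      field_simp
      ring
    rw [hq] at hbern
    -- (j-μ)/(j+1) ≤ 1 - (1+μ)/(j+2)
    have hstep : ((j:ℝ) - μ) / ((j:ℝ) + 1) ≤ 1 + (1 + μ) * -(1 / ((j:ℝ) + 2)) := by
      rw [div_le_iff₀ h1]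
      have : (1:ℝ) + (1 + μ) * -(1 / ((j:ℝ) + 2)) = 1 - (1 + μ) / ((j:ℝ) + 2) := by ring
      rw [this]
      rw [sub_mul, one_mul]
      have hfrac : (1 + μ) / ((j:ℝ) + 2) * ((j:ℝ) + 1) ≤ 1 + μ := by
        rw [div_mul_eq_mul_div, div_le_iff₀ h2]
        nlinarith
      linarith
    have hratio : ((j:ℝ) - μ) / ((j:ℝ) + 1) ≤ (((j:ℝ) + 1) / ((j:ℝ) + 2)) ^ (1 + μ) :=
      le_trans hstep hbern
    -- rewrite the rpow quotient as d (j+1) / d j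
    have hdq : (((j:ℝ) + 1) / ((j:ℝ) + 2)) ^ (1 + μ) = d (j + 1) / d j := by
      rw [hd]
      simp only []
      rw [Real.div_rpow h1.le h2.le]
      push_cast
      rw [show ((j:ℝ) + 1 + 1) = (j:ℝ) + 2 by ring]
      rw [Real.rpow_neg h1.le, Real.rpow_neg h2.le, inv_div_inv]
    rw [hdq] at hratio
    rw [div_le_div_iff₀ h1 (hdpos j)] at hratio
    linarith [hratio]
  set b : ℕ → ℝ := fun j => cesaroA (-μ - 1) j with hb
  set J : ℕ := ⌈μ⌉₊ with hJdef
  have hJ : μ ≤ (J : ℝ) := Nat.le_ceil μ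
  set K : ℝ := |b J| / d J with hK
  have hK0 : 0 ≤ K := div_nonneg (abs_nonneg _) (hdpos J).le
  have claim : ∀ m : ℕ, |b (J + m)| ≤ K * d (J + m) := by
    intro m
    induction m with
    | zero =>
      have : K * d (J + 0) = |b J| := by
        rw [hK, Nat.add_zero]; field_simp [(hdpos J).ne']
      rw [this]
      simp
    | succ m ih =>
      set j : ℕ := J + m with hj
      have hjμ : μ ≤ (j : ℝ) := le_trans hJ (by exact_mod_cast Nat.le_add_right J m)
      have hrec := cesaroA_succ h j
      have h1 : (0:ℝ) < (j : ℝ) + 1 := by positivity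
      have habs : ((j:ℝ) + 1) * |b (j + 1)| = ((j:ℝ) - μ) * |b j| := by
        have := congrArg abs hrec
        rwa [abs_mul, abs_mul, abs_of_pos h1, abs_of_nonneg (by linarith : (0:ℝ) ≤ (j:ℝ) - μ)]
          at this
      have hkey := key j hjμ
      have hgoal : ((j:ℝ) + 1) * |b (j + 1)| ≤ ((j:ℝ) + 1) * (K * d (j + 1)) := by
        calc ((j:ℝ) + 1) * |b (j + 1)| = ((j:ℝ) - μ) * |b j| := habs
          _ ≤ ((j:ℝ) - μ) * (K * d j) := by
              apply mul_le_mul_of_nonneg_left ih (by linarith)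
          _ = K * (((j:ℝ) - μ) * d j) := by ring
          _ ≤ K * (((j:ℝ) + 1) * d (j + 1)) := by
              apply mul_le_mul_of_nonneg_left hkey hK0
          _ = ((j:ℝ) + 1) * (K * d (j + 1)) := by ring
      have := (mul_le_mul_iff_right₀ h1).mp hgoal
      show |b (J + (m+1))| ≤ K * d (J + (m+1))
      rw [show J + (m+1) = j + 1 from rfl]
      exact this
  have hsd0 : Summable (fun n : ℕ => ((n:ℝ)) ^ (-(1 + μ))) :=
    Real.summable_nat_rpow.mpr (by linarith)
  have hsd : Summable d := by
    have := (summable_nat_add_iff 1).mpr hsd0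
    refine this.congr fun j => ?_
    rw [hd]
    push_cast
    norm_num
  have hsum : Summable (fun m : ℕ => |b (m + J)|) := by
    refine Summable.of_nonneg_of_le (fun m => abs_nonneg _) (fun m => ?_)
      (((summable_nat_add_iff J).mpr hsd).mul_left K)
    simpa [add_comm] using claim m
  exact (summable_nat_add_iff J).mp hsum

section Interior

open Complex Metric

lemma summable_cesaroA_mul_pow {μ : ℝ} (hμ : 0 < μ) (h : ∀ n : ℕ, μ ≠ n) {w : ℂ}
    (hw : ‖w‖ ≤ 1) : Summable (fun j : ℕ => (cesaroA (-μ - 1) j : ℂ) * w ^ j) := by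
  apply Summable.of_norm_bounded (summable_abs_cesaroA hμ h)
  intro j
  rw [norm_mul, Complex.norm_real, norm_pow, Real.norm_eq_abs]
  calc |cesaroA (-μ - 1) j| * ‖w‖ ^ j ≤ |cesaroA (-μ - 1) j| * 1 :=
        mul_le_mul_of_nonneg_left (pow_le_one₀ (norm_nonneg w) hw) (abs_nonneg _)
    _ = _ := mul_one _

lemma summable_cesaroA_deriv {μ : ℝ} (hμ : 0 < μ) (h : ∀ n : ℕ, μ ≠ n) {w : ℂ}
    (hw : ‖w‖ < 1) :
    Summable (fun j : ℕ => (cesaroA (-μ - 1) j : ℂ) * ((j : ℂ) * w ^ (j - 1))) := by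
  set b : ℕ → ℝ := fun j => cesaroA (-μ - 1) j with hb
  have Sb := summable_abs_cesaroA hμ h
  set B : ℝ := ∑' j, |b j| with hB
  have hBle : ∀ j, |b j| ≤ B := fun j => Summable.le_tsum Sb j (fun m _ => abs_nonneg _)
  have hsum : Summable (fun j : ℕ => B * ((j : ℝ) * ‖w‖ ^ (j - 1))) := by
    apply Summable.mul_left
    apply (summable_nat_add_iff 1).mp
    have h1 : Summable (fun n : ℕ => (n : ℝ) ^ 1 * ‖w‖ ^ n) :=
      summable_pow_mul_geometric_of_norm_lt_one 1
        (by rw [Real.norm_eq_abs, _root_.abs_of_nonneg (norm_nonneg w)]; exact hw)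
    have h0 : Summable (fun n : ℕ => ‖w‖ ^ n) :=
      summable_geometric_of_lt_one (norm_nonneg w) hw
    apply ((h1.add h0).congr)
    intro n
    push_cast
    ring
  apply Summable.of_norm_bounded hsum
  intro j
  rw [norm_mul, norm_mul, Complex.norm_real, Complex.norm_natCast, norm_pow,
    Real.norm_eq_abs]
  apply mul_le_mul (hBle j) le_rfl (by positivity) ((abs_nonneg _).trans (hBle j))

lemma summable_cesaroA_mul_nat {μ : ℝ} (hμ : 0 < μ) (h : ∀ n : ℕ, μ ≠ n) {w : ℂ}
    (hw : ‖w‖ < 1) :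
    Summable (fun j : ℕ => (j : ℂ) * ((cesaroA (-μ - 1) j : ℂ) * w ^ j)) := by
  set b : ℕ → ℝ := fun j => cesaroA (-μ - 1) j with hb
  have Sb := summable_abs_cesaroA hμ h
  set B : ℝ := ∑' j, |b j| with hB
  have hBle : ∀ j, |b j| ≤ B := fun j => Summable.le_tsum Sb j (fun m _ => abs_nonneg _)
  have hsum : Summable (fun j : ℕ => B * ((j : ℝ) ^ 1 * ‖w‖ ^ j)) := by
    apply Summable.mul_left
    exact summable_pow_mul_geometric_of_norm_lt_one 1
      (by rw [Real.norm_eq_abs, _root_.abs_of_nonneg (norm_nonneg w)]; exact hw)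
  apply Summable.of_norm_bounded hsum
  intro j
  rw [norm_mul, norm_mul, Complex.norm_real, Complex.norm_natCast, norm_pow,
    Real.norm_eq_abs, pow_one]
  calc (j : ℝ) * (|b j| * ‖w‖ ^ j) ≤ (j : ℝ) * (B * ‖w‖ ^ j) := by
        apply mul_le_mul_of_nonneg_left _ (Nat.cast_nonneg j)
        exact mul_le_mul_of_nonneg_right (hBle j) (by positivity)
    _ = B * ((j : ℝ) * ‖w‖ ^ j) := by ring

lemma hasDerivAt_cesaroA_tsum {μ : ℝ} (hμ : 0 < μ) (h : ∀ n : ℕ, μ ≠ n) {w : ℂ}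
    (hw : ‖w‖ < 1) :
    HasDerivAt (fun y : ℂ => ∑' j : ℕ, (cesaroA (-μ - 1) j : ℂ) * y ^ j)
      (∑' j : ℕ, (cesaroA (-μ - 1) j : ℂ) * ((j : ℂ) * w ^ (j - 1))) w := by
  set b : ℕ → ℝ := fun j => cesaroA (-μ - 1) j with hb
  have Sb := summable_abs_cesaroA hμ h
  set B : ℝ := ∑' j, |b j| with hB
  have hBle : ∀ j, |b j| ≤ B := fun j => Summable.le_tsum Sb j (fun m _ => abs_nonneg _)
  set r : ℝ := (‖w‖ + 1) / 2 with hr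
  have hr0 : 0 < r := by positivity
  have hwr : ‖w‖ < r := by rw [hr]; linarith
  have hr1 : r < 1 := by rw [hr]; linarith
  have hu : Summable (fun j : ℕ => B * ((j : ℝ) * r ^ (j - 1))) := by
    apply Summable.mul_left
    apply (summable_nat_add_iff 1).mp
    have h1 : Summable (fun n : ℕ => (n : ℝ) ^ 1 * r ^ n) :=
      summable_pow_mul_geometric_of_norm_lt_one 1
        (by rw [Real.norm_eq_abs, abs_of_pos hr0]; exact hr1)
    have h0 : Summable (fun n : ℕ => r ^ n) := summable_geometric_of_lt_one hr0.le hr1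
    apply ((h1.add h0).congr)
    intro n
    push_cast
    ring
  apply hasDerivAt_tsum_of_isPreconnected (t := Metric.ball (0:ℂ) r) hu isOpen_ball
    ((convex_ball (0:ℂ) r).isPreconnected)
    (g := fun (n : ℕ) (y : ℂ) => (b n : ℂ) * y ^ n)
    (g' := fun (n : ℕ) (y : ℂ) => (b n : ℂ) * ((n : ℂ) * y ^ (n - 1))) (y₀ := 0)
  · intro n y _
    exact (hasDerivAt_pow n y).const_mul _
  · intro n y hy
    rw [mem_ball_zero_iff] at hy
    rw [norm_mul, norm_mul, Complex.norm_real, Complex.norm_natCast, norm_pow,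
      Real.norm_eq_abs]
    have h1 : ‖y‖ ^ (n - 1) ≤ r ^ (n - 1) := pow_le_pow_left₀ (norm_nonneg y) hy.le _
    apply mul_le_mul (hBle n) _ (by positivity) ((abs_nonneg _).trans (hBle n))
    exact mul_le_mul_of_nonneg_left h1 (Nat.cast_nonneg n)
  · exact mem_ball_self hr0
  · apply Summable.of_norm_bounded Sb
    intro j
    rw [norm_mul, Complex.norm_real, Real.norm_eq_abs, norm_pow, norm_zero]
    rcases j with _ | j
    · simp; exact le_rfl
    · simp [abs_nonneg]
  · rwa [mem_ball_zero_iff]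

end Interior

section InteriorValue

open Complex Metric

lemma cesaroA_succ_complex {μ : ℝ} (h : ∀ n : ℕ, μ ≠ n) (j : ℕ) :
    ((j : ℂ) + 1) * (cesaroA (-μ - 1) (j + 1) : ℂ) =
      ((j : ℂ) - (μ : ℂ)) * (cesaroA (-μ - 1) j : ℂ) := by
  have := congrArg (fun x : ℝ => (x : ℂ)) (cesaroA_succ h j)
  push_cast at this ⊢
  convert this using 2

lemma cesaroA_ODE {μ : ℝ} (hμ : 0 < μ) (h : ∀ n : ℕ, μ ≠ n) {y : ℂ} (hy : ‖y‖ < 1) :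
    (1 - y) * (∑' j : ℕ, (cesaroA (-μ - 1) j : ℂ) * ((j : ℂ) * y ^ (j - 1))) +
      (μ : ℂ) * (∑' j : ℕ, (cesaroA (-μ - 1) j : ℂ) * y ^ j) = 0 := by
  have hS' := summable_cesaroA_deriv hμ h hy
  have hSn := summable_cesaroA_mul_nat hμ h hy
  have hS := summable_cesaroA_mul_pow hμ h hy.le
  set T' : ℂ := ∑' j : ℕ, (cesaroA (-μ - 1) j : ℂ) * ((j : ℂ) * y ^ (j - 1)) with hT'
  set T : ℂ := ∑' j : ℕ, (cesaroA (-μ - 1) j : ℂ) * y ^ j with hT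
  have e1 : T' = ∑' m : ℕ, ((m : ℂ) + 1) * ((cesaroA (-μ - 1) (m + 1) : ℂ) * y ^ m) := by
    rw [hT', Summable.tsum_eq_zero_add hS']
    simp only [Nat.cast_zero, zero_mul, mul_zero, zero_add, Nat.cast_add, Nat.cast_one,
      Nat.add_sub_cancel]
    exact tsum_congr fun m => by ring
  have e2 : T' = ∑' m : ℕ, (((m : ℂ) - (μ : ℂ)) * ((cesaroA (-μ - 1) m : ℂ) * y ^ m)) := by
    rw [e1]
    exact tsum_congr fun m => by
      have := cesaroA_succ_complex h m
      calc ((m : ℂ) + 1) * ((cesaroA (-μ - 1) (m + 1) : ℂ) * y ^ m)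
          = (((m : ℂ) + 1) * (cesaroA (-μ - 1) (m + 1) : ℂ)) * y ^ m := by ring
        _ = (((m : ℂ) - (μ : ℂ)) * (cesaroA (-μ - 1) m : ℂ)) * y ^ m := by rw [this]
        _ = ((m : ℂ) - (μ : ℂ)) * ((cesaroA (-μ - 1) m : ℂ) * y ^ m) := by ring
  have e3 : T' = (∑' m : ℕ, (m : ℂ) * ((cesaroA (-μ - 1) m : ℂ) * y ^ m)) - (μ : ℂ) * T := by
    rw [e2, hT, ← tsum_mul_left (a := (μ : ℂ)), ← Summable.tsum_sub hSn (hS.mul_left _)]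
    exact tsum_congr fun m => by ring
  have e4 : (∑' m : ℕ, (m : ℂ) * ((cesaroA (-μ - 1) m : ℂ) * y ^ m)) = y * T' := by
    rw [hT', ← tsum_mul_left (a := y)]
    refine tsum_congr fun m => ?_
    rcases m with _ | m
    · simp
    · have hp : y ^ (m + 1) = y ^ m * y := pow_succ y m
      rw [Nat.add_sub_cancel]
      push_cast
      rw [hp]
      ring
  rw [e4] at e3
  linear_combination e3

lemma tsum_cesaroA_interior {μ : ℝ} (hμ : 0 < μ) (h : ∀ n : ℕ, μ ≠ n) {w : ℂ}
    (hw : ‖w‖ < 1) :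
    ∑' j : ℕ, (cesaroA (-μ - 1) j : ℂ) * w ^ j = (1 - w) ^ (μ : ℂ) := by
  have hHd : ∀ y ∈ ball (0 : ℂ) 1, HasDerivAt
      (fun x : ℂ => (∑' j : ℕ, (cesaroA (-μ - 1) j : ℂ) * x ^ j) * (1 - x) ^ (-(μ : ℂ)))
      0 y := by
    intro y hy
    rw [mem_ball_zero_iff] at hy
    have h1y : (1 : ℂ) - y ≠ 0 := by
      intro hc
      have : y = 1 := by linear_combination -hc
      rw [this] at hy
      simp at hy
    have hslit : (1 : ℂ) - y ∈ slitPlane := by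
      rw [mem_slitPlane_iff]
      left
      have : y.re ≤ ‖y‖ := by
        calc y.re ≤ |y.re| := le_abs_self _
          _ ≤ ‖y‖ := Complex.abs_re_le_norm y
      simp only [Complex.sub_re, Complex.one_re]
      linarith
    have hd1 : HasDerivAt (fun x : ℂ => (1 : ℂ) - x) (-1) y := by
      simpa using (hasDerivAt_id y).const_sub (1 : ℂ)
    have hd2 := hd1.cpow_const (c := -(μ : ℂ)) hslit
    have hdF := hasDerivAt_cesaroA_tsum hμ h hy
    have hdH := hdF.mul hd2
    have hexp : ((1 : ℂ) - y) ^ (-(μ : ℂ)) =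
        ((1 : ℂ) - y) ^ (-(μ : ℂ) - 1) * ((1 : ℂ) - y) := by
      have hc := Complex.cpow_add (-(μ : ℂ) - 1) 1 h1y
      rw [Complex.cpow_one] at hc
      rw [← hc]
      congr 1
      ring
    have hzero : (∑' j : ℕ, (cesaroA (-μ - 1) j : ℂ) * ((j : ℂ) * y ^ (j - 1))) *
          ((1 : ℂ) - y) ^ (-(μ : ℂ)) +
        (∑' j : ℕ, (cesaroA (-μ - 1) j : ℂ) * y ^ j) *
          (-(μ : ℂ) * ((1 : ℂ) - y) ^ (-(μ : ℂ) - 1) * -1) = 0 := by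
      rw [hexp]
      linear_combination ((1 : ℂ) - y) ^ (-(μ : ℂ) - 1) * cesaroA_ODE hμ h hy
    rw [hzero] at hdH
    exact hdH
  have hconst := (convex_ball (0 : ℂ) 1).is_const_of_fderivWithin_eq_zero
    (f := fun x : ℂ => (∑' j : ℕ, (cesaroA (-μ - 1) j : ℂ) * x ^ j) * (1 - x) ^ (-(μ : ℂ)))
    (fun x hx => ((hHd x hx).differentiableAt).differentiableWithinAt)
    (fun x hx => by
      rw [fderivWithin_of_isOpen isOpen_ball hx]
      rw [((hHd x hx).hasFDerivAt).fderiv]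
      ext v
      simp)
    (mem_ball_zero_iff.mpr hw) (mem_ball_self one_pos)
  have hH0 : (∑' j : ℕ, (cesaroA (-μ - 1) j : ℂ) * (0 : ℂ) ^ j) *
      ((1 : ℂ) - 0) ^ (-(μ : ℂ)) = 1 := by
    rw [tsum_eq_single 0 (fun n hn => by simp [zero_pow hn])]
    rw [pow_zero, mul_one, cesaroA_zero h]
    norm_num
  rw [hH0] at hconst
  have h1w : (1 : ℂ) - w ≠ 0 := by
    intro hc
    have : w = 1 := by linear_combination -hc
    rw [this] at hw
    simp at hw
  have hx : ((1 : ℂ) - w) ^ (-(μ : ℂ)) * ((1 : ℂ) - w) ^ (μ : ℂ) = 1 := by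
    rw [← Complex.cpow_add _ _ h1w]
    norm_num
  calc (∑' j : ℕ, (cesaroA (-μ - 1) j : ℂ) * w ^ j)
      = (∑' j : ℕ, (cesaroA (-μ - 1) j : ℂ) * w ^ j) *
        (((1 : ℂ) - w) ^ (-(μ : ℂ)) * ((1 : ℂ) - w) ^ (μ : ℂ)) := by rw [hx, mul_one]
    _ = ((∑' j : ℕ, (cesaroA (-μ - 1) j : ℂ) * w ^ j) * ((1 : ℂ) - w) ^ (-(μ : ℂ))) *
        ((1 : ℂ) - w) ^ (μ : ℂ) := by ring
    _ = (1 - w) ^ (μ : ℂ) := by rw [hconst, one_mul]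

end InteriorValue

section Boundary

open Complex Metric Filter Topology

lemma abs_tsum_cesaroA_boundary {μ : ℝ} (hμ : 0 < μ) (h : ∀ n : ℕ, μ ≠ n) {z : ℂ}
    (hz : ‖z‖ ≤ 1) :
    ‖∑' j : ℕ, (cesaroA (-μ - 1) j : ℂ) * z ^ j‖ = ‖1 - z‖ ^ μ := by
  have Sb := summable_abs_cesaroA hμ h
  set F : ℂ → ℂ := fun y => ∑' j : ℕ, (cesaroA (-μ - 1) j : ℂ) * y ^ j with hF
  have hFc : ContinuousOn F (closedBall (0 : ℂ) 1) := by
    refine (tendstoUniformlyOn_tsum Sb fun j x hx => ?_).continuousOn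
      (Eventually.of_forall fun t => ?_).frequently
    · rw [mem_closedBall_zero_iff] at hx
      rw [norm_mul, Complex.norm_real, norm_pow, Real.norm_eq_abs]
      calc |cesaroA (-μ - 1) j| * ‖x‖ ^ j ≤ |cesaroA (-μ - 1) j| * 1 :=
            mul_le_mul_of_nonneg_left (pow_le_one₀ (norm_nonneg x) hx) (abs_nonneg _)
        _ = _ := mul_one _
    · exact (continuous_finset_sum t fun j _ =>
        continuous_const.mul (continuous_pow j)).continuousOn
  have hIoo : Set.Ioo (0:ℝ) 1 ∈ 𝓝[<] (1:ℝ) :=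
    Ioo_mem_nhdsLT_of_mem (by constructor <;> norm_num)
  -- T1 : F (r z) tends to F z
  have hzball : z ∈ closedBall (0 : ℂ) 1 := mem_closedBall_zero_iff.mpr hz
  have hmap : Tendsto (fun r : ℝ => (r : ℂ) * z) (𝓝[<] (1:ℝ)) (𝓝[closedBall (0:ℂ) 1] z) := by
    rw [tendsto_nhdsWithin_iff]
    constructor
    · have hcont : Continuous (fun r : ℝ => (r : ℂ) * z) :=
        Complex.continuous_ofReal.mul continuous_const
      have h2 : Tendsto (fun r : ℝ => (r : ℂ) * z) (𝓝[<] (1:ℝ)) (𝓝 ((1:ℝ) * z)) :=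
        ((hcont.tendsto 1).mono_left (nhdsWithin_le_nhds (s := Set.Iio 1)))
      simpa using h2
    · filter_upwards [hIoo] with r hr
      rw [mem_closedBall_zero_iff, norm_mul, Complex.norm_real, Real.norm_eq_abs,
        abs_of_pos hr.1]
      calc r * ‖z‖ ≤ 1 * 1 := mul_le_mul hr.2.le hz (norm_nonneg z) (by norm_num)
        _ = 1 := by norm_num
  have T1 : Tendsto (fun r : ℝ => ‖F ((r : ℂ) * z)‖) (𝓝[<] (1:ℝ))
      (𝓝 ‖F z‖) :=
    (continuous_norm.tendsto _).comp ((hFc z hzball).tendsto.comp hmap)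
  -- T2 : eventual equality with |1 - r z| ^ μ
  have T2 : (fun r : ℝ => ‖F ((r : ℂ) * z)‖) =ᶠ[𝓝[<] (1:ℝ)]
      (fun r : ℝ => ‖1 - (r : ℂ) * z‖ ^ μ) := by
    filter_upwards [hIoo] with r hr
    have hrz : ‖(r : ℂ) * z‖ < 1 := by
      rw [norm_mul, Complex.norm_real, Real.norm_eq_abs, abs_of_pos hr.1]
      calc r * ‖z‖ ≤ r * 1 := mul_le_mul_of_nonneg_left hz hr.1.le
        _ = r := by ring
        _ < 1 := hr.2
    rw [hF]
    simp only
    rw [tsum_cesaroA_interior hμ h hrz]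
    exact Complex.norm_cpow_real _ μ
  -- T3 : the limit of the right-hand side
  have T3 : Tendsto (fun r : ℝ => ‖1 - (r : ℂ) * z‖ ^ μ) (𝓝[<] (1:ℝ))
      (𝓝 (‖1 - z‖ ^ μ)) := by
    have hin : Tendsto (fun r : ℝ => ‖1 - (r : ℂ) * z‖) (𝓝 (1:ℝ))
        (𝓝 ‖1 - z‖) := by
      have hcont : Continuous (fun r : ℝ => ‖1 - (r : ℂ) * z‖) :=
        continuous_norm.comp (continuous_const.sub
          (Complex.continuous_ofReal.mul continuous_const))
      have := hcont.tendsto 1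
      simpa using this
    exact ((Real.continuousAt_rpow_const _ μ (Or.inr hμ.le)).tendsto.comp
      (hin.mono_left nhdsWithin_le_nhds))
  exact tendsto_nhds_unique (T1.congr' T2) T3

lemma abs_one_sub_exp (θ : ℝ) :
    ‖1 - Complex.exp ((θ : ℂ) * Complex.I)‖ = 2 * |Real.sin (θ / 2)| := by
  have hre : (1 - Complex.exp ((θ : ℂ) * Complex.I)).re = 1 - Real.cos θ := by
    rw [Complex.sub_re, Complex.one_re, Complex.exp_ofReal_mul_I_re]
  have him : (1 - Complex.exp ((θ : ℂ) * Complex.I)).im = -Real.sin θ := by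
    rw [Complex.sub_im, Complex.one_im, Complex.exp_ofReal_mul_I_im]
    ring
  rw [Complex.norm_def, Complex.normSq_apply, hre, him]
  have hkey : (1 - Real.cos θ) * (1 - Real.cos θ) + -Real.sin θ * -Real.sin θ =
      (2 * |Real.sin (θ / 2)|) ^ 2 := by
    have hc : Real.cos θ = 1 - 2 * Real.sin (θ / 2) ^ 2 := by
      rw [show θ = 2 * (θ / 2) by ring, Real.cos_two_mul,
        show Real.cos (θ/2) ^ 2 = 1 - Real.sin (θ/2) ^ 2 by
          linarith [Real.sin_sq_add_cos_sq (θ/2)]]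
      ring
    have hs : Real.sin θ ^ 2 + Real.cos θ ^ 2 = 1 := Real.sin_sq_add_cos_sq θ
    have habs : |Real.sin (θ/2)| ^ 2 = Real.sin (θ/2) ^ 2 := _root_.sq_abs _
    nlinarith [_root_.sq_abs (Real.sin (θ/2))]
  rw [hkey, Real.sqrt_sq (by positivity)]

end Boundary

section Swap

open MeasureTheory intervalIntegral

lemma tsum_intervalIntegral_swap {f : ℝ → ℝ} (hf : Continuous f) {w : ℕ → ℝ → ℝ}
    (hw : ∀ j, Continuous (w j)) {M : ℝ} (hM : ∀ j θ, |w j θ| ≤ M)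
    {β : ℕ → ℝ} (hβ : Summable fun j => |β j|) :
    ∑' j : ℕ, β j * ∫ θ in (0:ℝ)..π, f θ * w j θ =
      ∫ θ in (0:ℝ)..π, f θ * ∑' j : ℕ, β j * w j θ := by
  have hpi : (0:ℝ) ≤ π := Real.pi_pos.le
  have hint : ∀ j : ℕ, IntegrableOn (fun θ => β j * (f θ * w j θ)) (Set.Ioc 0 π) := by
    intro j
    exact (continuous_const.mul (hf.mul (hw j))).integrableOn_Ioc
  have hM0 : 0 ≤ M := le_trans (abs_nonneg _) (hM 0 0)
  set Kf : ℝ := ∫ θ in Set.Ioc (0:ℝ) π, |f θ| with hKf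
  have hfabs_int : IntegrableOn (fun θ => |f θ|) (Set.Ioc 0 π) := hf.abs.integrableOn_Ioc
  have hbound : ∀ j : ℕ, (∫ θ in Set.Ioc (0:ℝ) π, ‖β j * (f θ * w j θ)‖) ≤ |β j| * (M * Kf) := by
    intro j
    have h1 : ∀ θ : ℝ, ‖β j * (f θ * w j θ)‖ = |β j| * |f θ * w j θ| := by
      intro θ
      rw [Real.norm_eq_abs, abs_mul]
    simp only [h1]
    rw [MeasureTheory.integral_const_mul]
    have h2 : (∫ θ in Set.Ioc (0:ℝ) π, |f θ * w j θ|) ≤ ∫ θ in Set.Ioc (0:ℝ) π, M * |f θ| := by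
      apply setIntegral_mono_on ((hf.mul (hw j)).abs.integrableOn_Ioc)
        (hfabs_int.const_mul M) measurableSet_Ioc
      intro θ _
      rw [Pi.mul_apply, abs_mul]
      calc |f θ| * |w j θ| ≤ |f θ| * M := mul_le_mul_of_nonneg_left (hM j θ) (abs_nonneg _)
        _ = M * |f θ| := mul_comm _ _
    rw [MeasureTheory.integral_const_mul] at h2
    exact mul_le_mul_of_nonneg_left h2 (abs_nonneg _)
  have hsumint : Summable (fun j : ℕ => ∫ θ in Set.Ioc (0:ℝ) π, ‖β j * (f θ * w j θ)‖) := by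
    apply Summable.of_nonneg_of_le
      (fun j => integral_nonneg (fun θ => norm_nonneg _)) hbound (hβ.mul_right (M * Kf))
  have hswap := MeasureTheory.integral_tsum_of_summable_integral_norm hint hsumint
  calc ∑' j : ℕ, β j * ∫ θ in (0:ℝ)..π, f θ * w j θ
      = ∑' j : ℕ, ∫ θ in Set.Ioc (0:ℝ) π, β j * (f θ * w j θ) := by
        refine tsum_congr fun j => ?_
        rw [integral_of_le hpi, MeasureTheory.integral_const_mul]
    _ = ∫ θ in Set.Ioc (0:ℝ) π, ∑' j : ℕ, β j * (f θ * w j θ) := hswap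
    _ = ∫ θ in Set.Ioc (0:ℝ) π, f θ * ∑' j : ℕ, β j * w j θ := by
        refine MeasureTheory.integral_congr_ae (Filter.Eventually.of_forall fun θ => ?_)
        show (∑' j : ℕ, β j * (f θ * w j θ)) = f θ * ∑' j : ℕ, β j * w j θ
        rw [← tsum_mul_left]
        exact tsum_congr fun j => by ring
    _ = ∫ θ in (0:ℝ)..π, f θ * ∑' j : ℕ, β j * w j θ := (integral_of_le hpi).symm

end Swap

section Pointwise

open Complex

lemma P_eq_re {ρ : ℝ} (hρ : 0 < ρ) (h : ∀ n : ℕ, ρ ≠ n) (l : ℕ) (θ : ℝ) :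
    ∑' j : ℕ, cesaroA (-ρ - 1) j * Real.cos ((↑(l + j) : ℝ) * θ) =
      ((Complex.exp ((θ : ℂ) * Complex.I)) ^ l *
        ∑' j : ℕ, (cesaroA (-ρ - 1) j : ℂ) * (Complex.exp ((θ : ℂ) * Complex.I)) ^ j).re := by
  set e : ℂ := Complex.exp ((θ : ℂ) * Complex.I) with he
  have hnorm : ‖e‖ = 1 := by
    rw [he]
    exact Complex.norm_exp_ofReal_mul_I θ
  have hsum0 : Summable (fun j : ℕ => (cesaroA (-ρ - 1) j : ℂ) * e ^ j) :=
    summable_cesaroA_mul_pow hρ h hnorm.le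
  have hsum : Summable (fun j : ℕ => e ^ l * ((cesaroA (-ρ - 1) j : ℂ) * e ^ j)) :=
    hsum0.mul_left _
  have hterm : ∀ j : ℕ, cesaroA (-ρ - 1) j * Real.cos ((↑(l + j) : ℝ) * θ) =
      (e ^ l * ((cesaroA (-ρ - 1) j : ℂ) * e ^ j)).re := by
    intro j
    have h1 : e ^ l * ((cesaroA (-ρ - 1) j : ℂ) * e ^ j) =
        (cesaroA (-ρ - 1) j : ℂ) * e ^ (l + j) := by
      rw [pow_add]; ring
    have h2 : e ^ (l + j) = Complex.exp (((↑(l + j) : ℝ) * θ : ℝ) * Complex.I) := by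
      rw [he, ← Complex.exp_nat_mul]
      congr 1
      push_cast
      ring
    rw [h1, h2, Complex.re_ofReal_mul, Complex.exp_ofReal_mul_I_re]
  calc ∑' j : ℕ, cesaroA (-ρ - 1) j * Real.cos ((↑(l + j) : ℝ) * θ)
      = ∑' j : ℕ, (e ^ l * ((cesaroA (-ρ - 1) j : ℂ) * e ^ j)).re := tsum_congr hterm
    _ = (∑' j : ℕ, e ^ l * ((cesaroA (-ρ - 1) j : ℂ) * e ^ j)).re := by
        have := Complex.reCLM.map_tsum hsum
        simp only [Complex.reCLM_apply] at this
        exact this.symm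
    _ = (e ^ l * ∑' j : ℕ, (cesaroA (-ρ - 1) j : ℂ) * e ^ j).re := by rw [tsum_mul_left]

lemma G_bound {μ ν : ℝ} (hμ0 : 0 < μ) (hν0 : 0 < ν)
    (hμn : ∀ n : ℕ, μ ≠ n) (hνn : ∀ n : ℕ, ν ≠ n)
    (k : ℕ) {θ : ℝ} (h0 : 0 ≤ θ) (hπ : θ ≤ π) :
    |∑' i : ℕ, cesaroA (-ν - 1) i *
        ∑' j : ℕ, cesaroA (-μ - 1) j * Real.cos ((↑(k + 2 * i + j) : ℝ) * θ)| ≤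
      (2:ℝ) ^ μ * (4:ℝ) ^ ν * (Real.sin (θ / 2) ^ (μ + ν) * Real.cos (θ / 2) ^ ν) := by
  set e : ℂ := Complex.exp ((θ : ℂ) * Complex.I) with he
  have habs_e : ‖e‖ = 1 := Complex.norm_exp_ofReal_mul_I θ
  have hnorm : ‖e‖ = 1 := by exact habs_e
  set Tμ : ℂ := ∑' j : ℕ, (cesaroA (-μ - 1) j : ℂ) * e ^ j with hTμ
  set Tν : ℂ := ∑' i : ℕ, (cesaroA (-ν - 1) i : ℂ) * (e ^ 2) ^ i with hTν
  have Sν := summable_abs_cesaroA hν0 hνn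
  -- rewrite inner sums
  have h1 : (∑' i : ℕ, cesaroA (-ν - 1) i *
      ∑' j : ℕ, cesaroA (-μ - 1) j * Real.cos ((↑(k + 2 * i + j) : ℝ) * θ)) =
      ∑' i : ℕ, ((cesaroA (-ν - 1) i : ℂ) * (e ^ (k + 2 * i) * Tμ)).re := by
    refine tsum_congr fun i => ?_
    rw [P_eq_re hμ0 hμn (k + 2 * i) θ, ← he, ← hTμ, Complex.re_ofReal_mul]
  have hsum2 : Summable (fun i : ℕ => (cesaroA (-ν - 1) i : ℂ) * (e ^ (k + 2 * i) * Tμ)) := by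
    apply Summable.of_norm_bounded (Sν.mul_right ‖Tμ‖)
    intro i
    rw [norm_mul, norm_mul, Complex.norm_real, Real.norm_eq_abs, norm_pow, hnorm, one_pow,
      one_mul]
  have h2 : (∑' i : ℕ, ((cesaroA (-ν - 1) i : ℂ) * (e ^ (k + 2 * i) * Tμ)).re) =
      ((e ^ k * Tμ) * Tν).re := by
    have := Complex.reCLM.map_tsum hsum2
    simp only [Complex.reCLM_apply] at this
    rw [← this]
    congr 1
    calc ∑' i : ℕ, (cesaroA (-ν - 1) i : ℂ) * (e ^ (k + 2 * i) * Tμ)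
        = ∑' i : ℕ, (e ^ k * Tμ) * ((cesaroA (-ν - 1) i : ℂ) * (e ^ 2) ^ i) := by
          refine tsum_congr fun i => ?_
          rw [pow_add, pow_mul]
          ring
      _ = (e ^ k * Tμ) * Tν := by rw [tsum_mul_left]
  rw [h1, h2]
  -- bound the real part
  have h3 : |((e ^ k * Tμ) * Tν).re| ≤ ‖Tμ‖ * ‖Tν‖ := by
    calc |((e ^ k * Tμ) * Tν).re| ≤ ‖(e ^ k * Tμ) * Tν‖ := Complex.abs_re_le_norm _
      _ = ‖e ^ k‖ * ‖Tμ‖ * ‖Tν‖ := by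
          rw [norm_mul, norm_mul]
      _ = ‖Tμ‖ * ‖Tν‖ := by
          rw [norm_pow, habs_e, one_pow, one_mul]
  -- compute the absolute values
  have hTμabs : ‖Tμ‖ = ‖1 - e‖ ^ μ :=
    abs_tsum_cesaroA_boundary hμ0 hμn hnorm.le
  have hTνabs : ‖Tν‖ = ‖1 - e ^ 2‖ ^ ν := by
    apply abs_tsum_cesaroA_boundary hν0 hνn
    rw [norm_pow, hnorm, one_pow]
  have hs0 : 0 ≤ Real.sin (θ / 2) :=
    Real.sin_nonneg_of_nonneg_of_le_pi (by linarith) (by linarith [Real.pi_pos])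
  have hc0 : 0 ≤ Real.cos (θ / 2) :=
    Real.cos_nonneg_of_mem_Icc ⟨by linarith [Real.pi_pos], by linarith⟩
  have hsθ0 : 0 ≤ Real.sin θ := Real.sin_nonneg_of_nonneg_of_le_pi h0 hπ
  have habs1 : ‖1 - e‖ = 2 * Real.sin (θ / 2) := by
    rw [he, abs_one_sub_exp θ, _root_.abs_of_nonneg hs0]
  have habs2 : ‖1 - e ^ 2‖ = 2 * Real.sin θ := by
    have he2 : e ^ 2 = Complex.exp (((2 * θ : ℝ) : ℂ) * Complex.I) := by
      rw [he, ← Complex.exp_nat_mul]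
      congr 1
      push_cast
      ring
    rw [he2, abs_one_sub_exp (2 * θ), show (2 * θ) / 2 = θ by ring, _root_.abs_of_nonneg hsθ0]
  have hsin2 : Real.sin θ = 2 * Real.sin (θ / 2) * Real.cos (θ / 2) := by
    rw [show θ = 2 * (θ / 2) by ring, Real.sin_two_mul]
    ring_nf
  have hfinal : (2 * Real.sin (θ / 2)) ^ μ * (2 * Real.sin θ) ^ ν =
      (2:ℝ) ^ μ * (4:ℝ) ^ ν * (Real.sin (θ / 2) ^ (μ + ν) * Real.cos (θ / 2) ^ ν) := by
    rw [hsin2, Real.mul_rpow (by norm_num) hs0,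
      show (2:ℝ) * (2 * Real.sin (θ / 2) * Real.cos (θ / 2)) =
        4 * (Real.sin (θ / 2) * Real.cos (θ / 2)) by ring,
      Real.mul_rpow (by norm_num) (mul_nonneg hs0 hc0), Real.mul_rpow hs0 hc0,
      Real.rpow_add' hs0 (by positivity)]
    ring
  calc |((e ^ k * Tμ) * Tν).re| ≤ ‖Tμ‖ * ‖Tν‖ := h3
    _ = (2 * Real.sin (θ / 2)) ^ μ * (2 * Real.sin θ) ^ ν := by
        rw [hTμabs, hTνabs, habs1, habs2]
    _ = _ := hfinal

end Pointwise

theorem fdiff_coeff_L1_estimate (μ ν : ℝ) (hμ : 0 ≤ μ) (hν : 0 ≤ ν) :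
    ∃ C : ℝ, 0 < C ∧ ∀ f : ℝ → ℝ, IsCosPoly f → ∀ k : ℕ,
      |fdiff 2 ν (fun l => fdiff 1 μ
          (fun j => ∫ θ in (0:ℝ)..π, f θ * Real.cos (j * θ)) l) k| ≤
        C * ∫ θ in (0:ℝ)..π,
          |f θ| * (Real.sin (θ / 2)) ^ (μ + ν) * (Real.cos (θ / 2)) ^ ν := by
  have hpi := Real.pi_pos
  refine ⟨(2:ℝ) ^ μ * (4:ℝ) ^ ν, by positivity, ?_⟩
  intro f hf k
  have hI : 0 ≤ ∫ θ in (0:ℝ)..π,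
      |f θ| * (Real.sin (θ / 2)) ^ (μ + ν) * (Real.cos (θ / 2)) ^ ν := by
    apply intervalIntegral.integral_nonneg hpi.le
    intro u hu
    have hs0 : 0 ≤ Real.sin (u / 2) :=
      Real.sin_nonneg_of_nonneg_of_le_pi (by linarith [hu.1]) (by linarith [hu.2, hpi])
    have hc0 : 0 ≤ Real.cos (u / 2) :=
      Real.cos_nonneg_of_mem_Icc ⟨by linarith [hu.1, hpi], by linarith [hu.2]⟩
    exact mul_nonneg (mul_nonneg (abs_nonneg _) (Real.rpow_nonneg hs0 _))
      (Real.rpow_nonneg hc0 _)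
  by_cases hμe : ∃ n : ℕ, μ = n
  · obtain ⟨n, hn⟩ := hμe
    have hz : fdiff 2 ν (fun l => fdiff 1 μ
        (fun j => ∫ θ in (0:ℝ)..π, f θ * Real.cos (j * θ)) l) k = 0 := by
      unfold fdiff
      simp [cesaroA_of_nat n hn]
    rw [hz, abs_zero]
    exact mul_nonneg (by positivity) hI
  by_cases hνe : ∃ n : ℕ, ν = n
  · obtain ⟨n, hn⟩ := hνe
    have hz : fdiff 2 ν (fun l => fdiff 1 μ
        (fun j => ∫ θ in (0:ℝ)..π, f θ * Real.cos (j * θ)) l) k = 0 := by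
      unfold fdiff
      simp [cesaroA_of_nat n hn]
    rw [hz, abs_zero]
    exact mul_nonneg (by positivity) hI
  push_neg at hμe hνe
  have hμ0 : 0 < μ := by
    rcases hμ.lt_or_eq with h' | h'
    · exact h'
    · exact absurd h'.symm (by simpa using hμe 0)
  have hν0 : 0 < ν := by
    rcases hν.lt_or_eq with h' | h'
    · exact h'
    · exact absurd h'.symm (by simpa using hνe 0)
  obtain ⟨N, cc, hfc⟩ := hf
  have hfcont : Continuous f := by
    have hfe : f = fun θ => ∑ k ∈ Finset.range N, cc k * Real.cos (k * θ) := funext hfc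
    rw [hfe]
    apply continuous_finset_sum
    intro i _
    exact continuous_const.mul (Real.continuous_cos.comp (continuous_const.mul continuous_id))
  have Sμ := summable_abs_cesaroA hμ0 hμe
  have Sν := summable_abs_cesaroA hν0 hνe
  set Bb : ℝ := ∑' j, |cesaroA (-μ - 1) j| with hBb
  have hPcont : ∀ l : ℕ,
      Continuous (fun θ : ℝ => ∑' j : ℕ, cesaroA (-μ - 1) j * Real.cos ((↑(l + j) : ℝ) * θ)) := by
    intro l
    apply continuous_tsum (u := fun j => |cesaroA (-μ - 1) j|) _ Sμ
    · intro j θ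
      rw [Real.norm_eq_abs, abs_mul]
      calc |cesaroA (-μ - 1) j| * |Real.cos ((↑(l + j) : ℝ) * θ)|
          ≤ |cesaroA (-μ - 1) j| * 1 :=
            mul_le_mul_of_nonneg_left (Real.abs_cos_le_one _) (abs_nonneg _)
        _ = _ := mul_one _
    · intro j
      exact continuous_const.mul (Real.continuous_cos.comp (continuous_const.mul continuous_id))
  have hPbd : ∀ (l : ℕ) (θ : ℝ),
      |∑' j : ℕ, cesaroA (-μ - 1) j * Real.cos ((↑(l + j) : ℝ) * θ)| ≤ Bb := by
    intro l θ
    have hterm : ∀ j : ℕ, |cesaroA (-μ - 1) j * Real.cos ((↑(l + j) : ℝ) * θ)| ≤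
        |cesaroA (-μ - 1) j| := by
      intro j
      rw [abs_mul]
      calc |cesaroA (-μ - 1) j| * |Real.cos ((↑(l + j) : ℝ) * θ)|
          ≤ |cesaroA (-μ - 1) j| * 1 :=
            mul_le_mul_of_nonneg_left (Real.abs_cos_le_one _) (abs_nonneg _)
        _ = _ := mul_one _
    have hsummable : Summable (fun j : ℕ =>
        |cesaroA (-μ - 1) j * Real.cos ((↑(l + j) : ℝ) * θ)|) :=
      Summable.of_nonneg_of_le (fun j => abs_nonneg _) hterm Sμ
    calc |∑' j : ℕ, cesaroA (-μ - 1) j * Real.cos ((↑(l + j) : ℝ) * θ)|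
        ≤ ∑' j : ℕ, |cesaroA (-μ - 1) j * Real.cos ((↑(l + j) : ℝ) * θ)| := by
          have h' : Summable (fun j : ℕ =>
              ‖cesaroA (-μ - 1) j * Real.cos ((↑(l + j) : ℝ) * θ)‖) := by
            simpa only [Real.norm_eq_abs] using hsummable
          have := norm_tsum_le_tsum_norm h'
          simpa only [Real.norm_eq_abs] using this
      _ ≤ ∑' j : ℕ, |cesaroA (-μ - 1) j| := Summable.tsum_le_tsum hterm hsummable Sμ
  have hinner : ∀ l : ℕ,
      (∑' j : ℕ, cesaroA (-μ - 1) j * ∫ θ in (0:ℝ)..π,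
          f θ * Real.cos ((↑(l + j) : ℝ) * θ)) =
      ∫ θ in (0:ℝ)..π, f θ * ∑' j : ℕ,
          cesaroA (-μ - 1) j * Real.cos ((↑(l + j) : ℝ) * θ) := by
    intro l
    apply tsum_intervalIntegral_swap hfcont
      (w := fun j θ => Real.cos ((↑(l + j) : ℝ) * θ)) (M := 1)
      (fun j => Real.continuous_cos.comp (continuous_const.mul continuous_id))
      (fun j θ => Real.abs_cos_le_one _) Sμ
  have hrepr : fdiff 2 ν (fun l => fdiff 1 μ
      (fun j => ∫ θ in (0:ℝ)..π, f θ * Real.cos (j * θ)) l) k =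
      ∫ θ in (0:ℝ)..π, f θ * ∑' i : ℕ, cesaroA (-ν - 1) i *
        ∑' j : ℕ, cesaroA (-μ - 1) j * Real.cos ((↑(k + 2 * i + j) : ℝ) * θ) := by
    unfold fdiff
    simp only [one_mul]
    calc ∑' i : ℕ, cesaroA (-ν - 1) i * ∑' j : ℕ, cesaroA (-μ - 1) j *
          ∫ θ in (0:ℝ)..π, f θ * Real.cos ((↑(k + 2 * i + j) : ℝ) * θ)
        = ∑' i : ℕ, cesaroA (-ν - 1) i * ∫ θ in (0:ℝ)..π, f θ *
            ∑' j : ℕ, cesaroA (-μ - 1) j * Real.cos ((↑(k + 2 * i + j) : ℝ) * θ) := by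
          exact tsum_congr fun i => by rw [hinner (k + 2 * i)]
      _ = ∫ θ in (0:ℝ)..π, f θ * ∑' i : ℕ, cesaroA (-ν - 1) i *
            ∑' j : ℕ, cesaroA (-μ - 1) j * Real.cos ((↑(k + 2 * i + j) : ℝ) * θ) := by
          exact tsum_intervalIntegral_swap hfcont
            (w := fun i θ => ∑' j : ℕ, cesaroA (-μ - 1) j *
              Real.cos ((↑(k + 2 * i + j) : ℝ) * θ)) (M := Bb)
            (fun i => hPcont (k + 2 * i)) (fun i θ => hPbd (k + 2 * i) θ) Sν
  rw [hrepr]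
  set G : ℝ → ℝ := fun θ => ∑' i : ℕ, cesaroA (-ν - 1) i *
    ∑' j : ℕ, cesaroA (-μ - 1) j * Real.cos ((↑(k + 2 * i + j) : ℝ) * θ) with hG
  have hGcont : Continuous G := by
    rw [hG]
    apply continuous_tsum (u := fun i => |cesaroA (-ν - 1) i| * Bb) _ (Sν.mul_right Bb)
    · intro i θ
      rw [Real.norm_eq_abs, abs_mul]
      exact mul_le_mul_of_nonneg_left (hPbd (k + 2 * i) θ) (abs_nonneg _)
    · intro i
      exact continuous_const.mul (hPcont (k + 2 * i))
  have habs : |∫ θ in (0:ℝ)..π, f θ * G θ| ≤ ∫ θ in (0:ℝ)..π, |f θ * G θ| := by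
    have := intervalIntegral.norm_integral_le_integral_norm
      (f := fun θ => f θ * G θ) (μ := MeasureTheory.volume) hpi.le
    simpa only [Real.norm_eq_abs] using this
  have hmono : (∫ θ in (0:ℝ)..π, |f θ * G θ|) ≤ ∫ θ in (0:ℝ)..π,
      ((2:ℝ) ^ μ * (4:ℝ) ^ ν) *
        (|f θ| * (Real.sin (θ / 2)) ^ (μ + ν) * (Real.cos (θ / 2)) ^ ν) := by
    apply intervalIntegral.integral_mono_on hpi.le
      ((hfcont.mul hGcont).abs.intervalIntegrable _ _)
    · apply Continuous.intervalIntegrable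
      apply continuous_const.mul
      apply Continuous.mul
      · apply hfcont.abs.mul
        exact (Real.continuous_sin.comp (continuous_id.div_const 2)).rpow_const
          (fun x => Or.inr (by positivity))
      · exact (Real.continuous_cos.comp (continuous_id.div_const 2)).rpow_const
          (fun x => Or.inr hν0.le)
    · intro θ hθ
      have hGb := G_bound hμ0 hν0 hμe hνe k hθ.1 hθ.2
      rw [Pi.mul_apply, abs_mul]
      calc |f θ| * |G θ| ≤ |f θ| * ((2:ℝ) ^ μ * (4:ℝ) ^ ν *
            (Real.sin (θ / 2) ^ (μ + ν) * Real.cos (θ / 2) ^ ν)) :=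
            mul_le_mul_of_nonneg_left hGb (abs_nonneg _)
        _ = ((2:ℝ) ^ μ * (4:ℝ) ^ ν) *
            (|f θ| * (Real.sin (θ / 2)) ^ (μ + ν) * (Real.cos (θ / 2)) ^ ν) := by ring
  have hconst : (∫ θ in (0:ℝ)..π, ((2:ℝ) ^ μ * (4:ℝ) ^ ν) *
      (|f θ| * (Real.sin (θ / 2)) ^ (μ + ν) * (Real.cos (θ / 2)) ^ ν)) =
      ((2:ℝ) ^ μ * (4:ℝ) ^ ν) * ∫ θ in (0:ℝ)..π,
        |f θ| * (Real.sin (θ / 2)) ^ (μ + ν) * (Real.cos (θ / 2)) ^ ν :=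
    intervalIntegral.integral_const_mul _ _
  calc |∫ θ in (0:ℝ)..π, f θ * G θ| ≤ ∫ θ in (0:ℝ)..π, |f θ * G θ| := habs
    _ ≤ _ := hmono
    _ = _ := hconst
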